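/- From conditional o_P to unconditional o_P (Lemma cond_to_op). Let ℱ_n be a sequence of sub-σ-algebras and A_n ≥ 0 a sequence of nonnegative integrable random variables. If the conditional expectations E(A_n | ℱ_n) converge to 0 in probability, then A_n converges to 0 in probability. -/

import Mathlib

open MeasureTheory ProbabilityTheory Filter

noncomputable section

/-- A sequence of real-valued random variables converges in probability to a constant `c`. -/
def TendstoInProb {Ω : Type*} [MeasurableSpace Ω] (P : Measure Ω)
    (X : ℕ → Ω → ℝ) (c : ℝ) : Prop :=
  ∀ ε : ℝ, 0 < ε → Tendsto (fun n => P {ω | ε ≤ |X n ω - c|}) atTop (nhds 0)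

/-! The set `s = {E(f | m) < η}` is `m`-measurable, so `∫_s f = ∫_s E(f | m) ≤ η`, and Markov's
inequality bounds `P(f ≥ ε, s)` by `η / ε`. Off `s` we have `E(f | m) ≥ η`, which is unlikely
once `E(f | m) → 0` in probability. -/

section CondMarkov

variable {Ω : Type*} {m m0 : MeasurableSpace Ω} {μ : Measure Ω} {f : Ω → ℝ}

theorem mul_measureReal_ge_inter_le_setIntegral_condExp (hm : m ≤ m0)
    [SigmaFinite (μ.trim hm)] (hf0 : 0 ≤ᵐ[μ] f) (hf : Integrable f μ) {s : Set Ω}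
    (hs : MeasurableSet[m] s) (ε : ℝ) :
    ε * μ.real ({ω | ε ≤ f ω} ∩ s) ≤ ∫ ω in s, μ[f | m] ω ∂μ := by
  rw [setIntegral_condExp hm hf hs, measureReal_def, ← Measure.restrict_apply' (hm s hs)]
  exact mul_meas_ge_le_integral_of_nonneg (ae_restrict_of_ae hf0) hf.restrict ε

theorem measure_ge_le_ofReal_div_add_measure_condExp_ge [IsProbabilityMeasure μ]
    (hm : m ≤ m0) (hf0 : 0 ≤ᵐ[μ] f) (hf : Integrable f μ) {ε η : ℝ} (hε : 0 < ε)
    (hη : 0 ≤ η) :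
    μ {ω | ε ≤ f ω} ≤ ENNReal.ofReal (η / ε) + μ {ω | η ≤ μ[f | m] ω} := by
  set s := {ω | μ[f | m] ω < η}
  have hs : MeasurableSet[m] s :=
    (stronglyMeasurable_condExp (m := m) (μ := μ) (f := f)).measurable measurableSet_Iio
  have h_on_s : μ.real ({ω | ε ≤ f ω} ∩ s) ≤ η / ε := by
    rw [le_div_iff₀' hε]
    calc ε * μ.real ({ω | ε ≤ f ω} ∩ s)
        ≤ ∫ ω in s, μ[f | m] ω ∂μ :=
          mul_measureReal_ge_inter_le_setIntegral_condExp hm hf0 hf hs ε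
      _ ≤ ∫ _ in s, η ∂μ :=
          setIntegral_mono_on integrable_condExp.integrableOn integrableOn_const
            (hm s hs) fun _ hω => le_of_lt hω
      _ = μ.real s * η := by rw [setIntegral_const, smul_eq_mul]
      _ ≤ η := mul_le_of_le_one_left hη measureReal_le_one
  calc μ {ω | ε ≤ f ω}
      ≤ μ ({ω | ε ≤ f ω} ∩ s) + μ sᶜ := by
        refine (measure_mono fun ω hω => ?_).trans (measure_union_le _ _)
        by_cases hω' : ω ∈ s
        exacts [Or.inl ⟨hω, hω'⟩, Or.inr hω']
    _ ≤ ENNReal.ofReal (η / ε) + μ {ω | η ≤ μ[f | m] ω} := by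
        gcongr
        · rw [← ofReal_measureReal]
          exact ENNReal.ofReal_le_ofReal h_on_s
        · exact fun ω (hω : ¬ _ < η) => not_lt.mp hω

end CondMarkov

/-- **Lemma (cond_to_op).** Let `F n` be a sequence of sub-σ-algebras and `A n ≥ 0` a sequence
of nonnegative integrable random variables. If the conditional expectations `E(A n | F n)`
converge to `0` in probability, then `A n` converges to `0` in probability. -/
theorem cond_to_op {Ω : Type*} [m0 : MeasurableSpace Ω] (P : Measure Ω)
    [IsProbabilityMeasure P]
    (A : ℕ → Ω → ℝ) (hA : ∀ n ω, 0 ≤ A n ω)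
    (hint : ∀ n, Integrable (A n) P)
    (F : ℕ → MeasurableSpace Ω) (hF : ∀ n, F n ≤ m0)
    (h : TendstoInProb P (fun n ω => (P[A n | F n]) ω) 0) :
    TendstoInProb P A 0 := by
  intro ε hε
  rw [ENNReal.tendsto_nhds_zero]
  intro δ hδ
  obtain ⟨r, -, hr_pos, hr_lt⟩ :=
    ENNReal.lt_iff_exists_real_btwn.mp (ENNReal.half_pos hδ.ne')
  have hη : 0 < r * ε := mul_pos (ENNReal.ofReal_pos.mp hr_pos) hε
  filter_upwards [ENNReal.tendsto_nhds_zero.mp (h _ hη) _ (ENNReal.half_pos hδ.ne')] with n hn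
  simp only [sub_zero, abs_of_nonneg (hA n _)] at hn ⊢
  calc P {ω | ε ≤ A n ω}
      ≤ ENNReal.ofReal (r * ε / ε) + P {ω | r * ε ≤ P[A n | F n] ω} :=
        measure_ge_le_ofReal_div_add_measure_condExp_ge (hF n)
          (Eventually.of_forall (hA n)) (hint n) hε hη.le
    _ ≤ δ / 2 + δ / 2 := by
        gcongr
        · rw [mul_div_cancel_right₀ r hε.ne']
          exact hr_lt.le
        · exact (measure_mono fun ω (hω : r * ε ≤ _) => hω.trans (le_abs_self _)).trans hn
    _ = δ := ENNReal.add_halves δ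

end
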